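/- arXiv:1702.07254 — 4 statements merged into one kernel-verified Lean document; each statement's English description precedes it below -/
import Mathlib

section
/- If the eigenvalues satisfy μ_i ≤ C·i^{-1/p} for all i ≥ 1 with constants C > 0 and 0 < p < 1, then the effective dimension N(λ) = ∑_i μ_i/(μ_i + λ) satisfies N(λ) ≤ (C^p/(1-p))·λ^{-p} for all λ > 0. -/
open Real

lemma aux_bern (t r : ℝ) (ht0 : 0 < t) (ht1 : t ≤ 1) (hr : 0 ≤ r) :
    1 + r * (1 - t) ≤ t ^ (-r) := by
  have h1 : t ^ (-r) = Real.exp (-r * Real.log t) := by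
    rw [Real.rpow_def_of_pos ht0]; ring_nf
  have h2 : 1 + (-r * Real.log t) ≤ Real.exp (-r * Real.log t) := by
    linarith [Real.add_one_le_exp (-r * Real.log t)]
  have h3 : Real.log t ≤ t - 1 := Real.log_le_sub_one_of_pos ht0
  have h4 : r * (1 - t) ≤ -r * Real.log t := by nlinarith
  rw [h1]; linarith

lemma aux_mvt (a b r : ℝ) (ha : 0 < a) (hab : a ≤ b) (hr : 0 ≤ r) :
    r * (b - a) * b ^ (-(r+1)) ≤ a ^ (-r) - b ^ (-r) := by
  have hb : 0 < b := ha.trans_le hab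
  have ht0 : 0 < a / b := div_pos ha hb
  have ht1 : a / b ≤ 1 := (div_le_one hb).mpr hab
  have h := aux_bern (a/b) r ht0 ht1 hr
  have hd : (a/b) ^ (-r) = a ^ (-r) / b ^ (-r) := Real.div_rpow ha.le hb.le _
  have hbr : (0:ℝ) < b ^ (-r) := Real.rpow_pos_of_pos hb _
  have hsplit : b ^ (-(r+1)) = b ^ (-r) / b := by
    rw [show -(r+1) = -r + (-1) from by ring, Real.rpow_add hb, Real.rpow_neg_one]
    ring
  rw [hd] at h
  have h2 : b ^ (-r) * (1 + r * (1 - a/b)) ≤ a ^ (-r) := by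
    have := (le_div_iff₀ hbr).mp h
    nlinarith
  rw [hsplit]
  have : r * (b - a) * (b ^ (-r) / b) = b ^ (-r) * (r * (1 - a/b)) := by
    field_simp
  nlinarith
theorem stmt3 (μ : ℕ → ℝ) (C p : ℝ) (hC : 0 < C) (hp0 : 0 < p) (hp1 : p < 1)
    (hpos : ∀ i, 0 < μ i)
    (hsum : Summable μ)
    (hdecay : ∀ i : ℕ, μ i ≤ C * ((i : ℝ) + 1) ^ (-(1 / p))) :
    ∀ lam : ℝ, 0 < lam →
      (∑' i : ℕ, μ i / (μ i + lam)) ≤ (C ^ p / (1 - p)) * lam ^ (-p) := by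
  intro lam hlam
  obtain ⟨q, hq⟩ : ∃ x : ℝ, x = 1 / p := ⟨_, rfl⟩
  have hq1 : 1 < q := hq ▸ one_lt_one_div hp0 hp1
  simp only [← hq] at hdecay
  obtain ⟨B, hBdef⟩ : ∃ x : ℝ, x = C / lam := ⟨_, rfl⟩
  have hB : 0 < B := hBdef ▸ div_pos hC hlam
  obtain ⟨A, hAdef⟩ : ∃ x : ℝ, x = B ^ p := ⟨_, rfl⟩
  have hA : 0 < A := hAdef ▸ Real.rpow_pos_of_pos hB p
  have hBA : B = A ^ q := by
    rw [hAdef, ← Real.rpow_mul hB.le, hq, mul_one_div_cancel hp0.ne', Real.rpow_one]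
  have h1p : 0 < 1 - p := by linarith
  obtain ⟨c, hcdef⟩ : ∃ x : ℝ, x = p / (1 - p) * B := ⟨_, rfl⟩
  obtain ⟨G, hGdef⟩ : ∃ g : ℕ → ℝ,
      g = fun (n : ℕ) => if (n : ℝ) ≤ A then A / (1 - p) - n else c * (n : ℝ) ^ (1 - q) := ⟨_, rfl⟩
  have hGpos : ∀ n : ℕ, (n:ℝ) ≤ A → G n = A / (1 - p) - n := by
    intro n h; rw [hGdef]; simp only [if_pos h]
  have hGneg : ∀ n : ℕ, A < (n:ℝ) → G n = c * (n : ℝ) ^ (1 - q) := by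
    intro n h; rw [hGdef]; simp only [if_neg (not_le.mpr h)]
  have hcr : c * (q - 1) = A ^ q := by
    rw [hcdef, hBA, hq]; field_simp
  have hc : 0 < c := hcdef ▸ mul_pos (div_pos hp0 h1p) hB
  have hterm : ∀ i : ℕ, μ i / (μ i + lam) ≤ G i - G (i + 1) := by
    intro i
    have hden : 0 < μ i + lam := add_pos (hpos i) hlam
    have hle1 : μ i / (μ i + lam) ≤ 1 := by
      rw [div_le_one hden]; linarith [hpos i]
    have hip : (0:ℝ) < (i:ℝ) + 1 := by positivity
    have hcast : ((i + 1 : ℕ) : ℝ) = (i : ℝ) + 1 := by push_cast; ring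
    have hle2 : μ i / (μ i + lam) ≤ A ^ q * ((i:ℝ) + 1) ^ (-q) := by
      rw [← hBA]
      have step1 : μ i / (μ i + lam) ≤ μ i / lam :=
        div_le_div_of_nonneg_left (hpos i).le hlam (by linarith [hpos i])
      have step2 : μ i / lam ≤ (C * ((i:ℝ)+1) ^ (-q)) / lam :=
        div_le_div_of_nonneg_right (hdecay i) hlam.le
      have e : (C * ((i:ℝ)+1) ^ (-q)) / lam = B * ((i:ℝ)+1) ^ (-q) := by
        rw [hBdef]; ring
      rw [e] at step2; linarith
    rcases le_or_gt ((i:ℝ) + 1) A with hcase | hcase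
    · have hi : (i:ℝ) ≤ A := by linarith
      have h1 : G i - G (i+1) = 1 := by
        rw [hGpos i hi, hGpos (i+1) (by rw [hcast]; exact hcase), hcast]; ring
      linarith
    · have hposq : (0:ℝ) < ((i:ℝ)+1) ^ (-q) := Real.rpow_pos_of_pos hip _
      have hAq : 0 < A ^ q := Real.rpow_pos_of_pos hA _
      have hGi1 : G (i+1) = c * ((i:ℝ)+1) ^ (1 - q) := by
        rw [hGneg (i+1) (by rw [hcast]; exact hcase), hcast]
      have e1 : -(q-1) = 1 - q := by ring
      have e2 : -((q-1)+1) = -q := by ring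
      rcases le_or_gt ((i:ℝ)) A with hcase2 | hcase2
      · have hGi : G i = A / (1 - p) - i := hGpos i hcase2
        have hmvt := aux_mvt A ((i:ℝ)+1) (q-1) hA hcase.le (by linarith)
        rw [e1, e2] at hmvt
        have hmvt2 : A ^ q * (((i:ℝ)+1) - A) * ((i:ℝ)+1) ^ (-q)
            ≤ c * (A ^ (1-q) - ((i:ℝ)+1) ^ (1-q)) := by
          have h := mul_le_mul_of_nonneg_left hmvt hc.le
          calc A ^ q * (((i:ℝ)+1) - A) * ((i:ℝ)+1) ^ (-q)
              = c * ((q-1) * (((i:ℝ)+1) - A) * ((i:ℝ)+1) ^ (-q)) := by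
                rw [← hcr]; ring
            _ ≤ c * (A ^ (1-q) - ((i:ℝ)+1) ^ (1-q)) := h
        have hcA : c * A ^ (1 - q) = p / (1-p) * A := by
          rw [hcdef, hBA, mul_assoc, ← Real.rpow_add hA]
          norm_num
        obtain ⟨X, hX⟩ : ∃ x : ℝ, x = A ^ q * ((i:ℝ)+1) ^ (-q) := ⟨_, rfl⟩
        have hX1 : X ≤ 1 := by
          have h1 : A ^ q ≤ ((i:ℝ)+1) ^ q := Real.rpow_le_rpow hA.le hcase.le (by linarith)
          have hpow : ((i:ℝ)+1) ^ (-q) * ((i:ℝ)+1) ^ q = 1 := by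
            rw [← Real.rpow_add hip]; simp
          rw [hX]; nlinarith
        rw [hGi, hGi1]
        have expand : A / (1-p) - (i:ℝ) = (A - i) + c * A ^ (1-q) := by
          rw [hcA]; field_simp; ring
        have hAi : (0:ℝ) ≤ A - i := by linarith
        have h5 : (A - i) * X ≤ A - (i:ℝ) := by
          have := mul_le_mul_of_nonneg_left hX1 hAi
          rw [mul_one] at this; linarith
        have hm : (((i:ℝ)+1) - A) * X ≤ c * (A ^ (1-q) - ((i:ℝ)+1) ^ (1-q)) := by
          calc (((i:ℝ)+1) - A) * X = A ^ q * (((i:ℝ)+1) - A) * ((i:ℝ)+1) ^ (-q) := by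
                rw [hX]; ring
            _ ≤ _ := hmvt2
        have hsplitX : X = (A - i) * X + (((i:ℝ)+1) - A) * X := by ring
        have : X ≤ (A / (1-p) - i) - c * ((i:ℝ)+1) ^ (1-q) := by
          rw [expand]; linarith
        rw [← hX] at hle2
        linarith
      · have hi0 : (0:ℝ) < (i:ℝ) := hA.trans hcase2
        have hGi : G i = c * (i:ℝ) ^ (1 - q) := hGneg i hcase2
        have hmvt := aux_mvt (i:ℝ) ((i:ℝ)+1) (q-1) hi0 (by linarith) (by linarith)
        rw [e1, e2] at hmvt
        have hmvt2 : A ^ q * ((i:ℝ)+1) ^ (-q)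
            ≤ c * ((i:ℝ) ^ (1-q) - ((i:ℝ)+1) ^ (1-q)) := by
          have h := mul_le_mul_of_nonneg_left hmvt hc.le
          calc A ^ q * ((i:ℝ)+1) ^ (-q)
              = c * ((q-1) * (((i:ℝ)+1) - (i:ℝ)) * ((i:ℝ)+1) ^ (-q)) := by
                rw [← hcr]; ring
            _ ≤ c * ((i:ℝ) ^ (1-q) - ((i:ℝ)+1) ^ (1-q)) := h
        rw [hGi, hGi1]
        linarith
  have hsummable : Summable (fun i => μ i / (μ i + lam)) := by
    apply Summable.of_nonneg_of_le (fun i => (div_pos (hpos i) (add_pos (hpos i) hlam)).le) (fun i => ?_) (hsum.div_const lam)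
    exact div_le_div_of_nonneg_left (hpos i).le hlam (by linarith [hpos i])
  have hG0 : G 0 = A / (1 - p) := by
    rw [hGpos 0 (by simpa using hA.le)]; simp
  have hGnonneg : ∀ n, 0 ≤ G n := by
    intro n
    rcases le_or_gt ((n:ℝ)) A with h | h
    · rw [hGpos n h]
      have : A ≤ A / (1-p) := by
        rw [le_div_iff₀ h1p]; nlinarith
      linarith
    · rw [hGneg n h]
      have hn : (0:ℝ) < (n:ℝ) := hA.trans h
      exact mul_nonneg hc.le (Real.rpow_nonneg hn.le _)
  have hpartial : ∀ n, ∑ i ∈ Finset.range n, μ i / (μ i + lam) ≤ A / (1 - p) := by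
    intro n
    calc ∑ i ∈ Finset.range n, μ i / (μ i + lam)
        ≤ ∑ i ∈ Finset.range n, (G i - G (i+1)) :=
          Finset.sum_le_sum fun i _ => hterm i
      _ = G 0 - G n := Finset.sum_range_sub' G n
      _ ≤ A / (1 - p) := by rw [hG0]; linarith [hGnonneg n]
  have hfin := Summable.tsum_le_of_sum_range_le hsummable hpartial
  refine hfin.trans (le_of_eq ?_)
  rw [hAdef, hBdef, Real.div_rpow hC.le hlam.le, Real.rpow_neg hlam.le]
  field_simp
end

section
/- Let (μ_i)_{i∈I} be positive reals and (a_i)_{i∈I} ∈ ℓ²(I) with ∑_i μ_i^{-β} a_i² = B² < ∞ for some 0 ≤ β ≤ 2. Then for all λ > 0 and all 0 ≤ γ ≤ β, one has ∑_i (λ/(μ_i+λ))² μ_i^{-γ} a_i² ≤ B² λ^{β-γ}. -/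
open Real

theorem stmt5 {I : Type*} [Countable I] (μ a : I → ℝ) (β B : ℝ)
    (hμ : ∀ i, 0 < μ i) (hβ0 : 0 ≤ β) (hβ2 : β ≤ 2) (hB : 0 ≤ B)
    (ha2 : Summable (fun i => a i ^ 2))
    (hsum : Summable (fun i => μ i ^ (-β) * a i ^ 2))
    (hbound : (∑' i, μ i ^ (-β) * a i ^ 2) ≤ B ^ 2) :
    ∀ lam γ : ℝ, 0 < lam → 0 ≤ γ → γ ≤ β →
      (∑' i, (lam / (μ i + lam)) ^ 2 * μ i ^ (-γ) * a i ^ 2)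
        ≤ B ^ 2 * lam ^ (β - γ) := by
  intro lam γ hlam hγ0 hγβ
  set θ := β - γ with hθdef
  have hθ0 : 0 ≤ θ := by simp [hθdef]; linarith
  have hθ2 : θ ≤ 2 := by simp [hθdef]; linarith
  have key : ∀ i, (lam / (μ i + lam)) ^ 2 * μ i ^ (-γ) * a i ^ 2
      ≤ lam ^ θ * (μ i ^ (-β) * a i ^ 2) := by
    intro i
    have hμi := hμ i
    have hs : 0 < μ i + lam := by linarith
    have h1 : lam ^ 2 * μ i ^ θ ≤ lam ^ θ * (μ i + lam) ^ 2 := by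
      have e1 : lam ^ 2 = lam ^ θ * lam ^ (2 - θ) := by
        rw [← Real.rpow_add hlam, ← Real.rpow_two]; ring_nf
      have e2 : ((μ i + lam) : ℝ) ^ 2 = (μ i + lam) ^ (2 - θ) * (μ i + lam) ^ θ := by
        rw [← Real.rpow_add hs, ← Real.rpow_two]; ring_nf
      rw [e1, e2, mul_assoc]
      refine mul_le_mul_of_nonneg_left ?_ (Real.rpow_nonneg hlam.le θ)
      exact mul_le_mul (Real.rpow_le_rpow hlam.le (by linarith) (by linarith))
        (Real.rpow_le_rpow hμi.le (by linarith) hθ0)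
        (Real.rpow_nonneg hμi.le θ) (Real.rpow_nonneg hs.le _)
    have h2 : (lam / (μ i + lam)) ^ 2 * μ i ^ (-γ) ≤ lam ^ θ * μ i ^ (-β) := by
      have hμγ : μ i ^ (-γ) = μ i ^ θ * μ i ^ (-β) := by
        rw [← Real.rpow_add hμi, hθdef]; ring_nf
      rw [hμγ, div_pow, div_mul_eq_mul_div, div_le_iff₀ (by positivity)]
      calc lam ^ 2 * (μ i ^ θ * μ i ^ (-β))
          = lam ^ 2 * μ i ^ θ * μ i ^ (-β) := by ring
        _
          ≤ lam ^ θ * (μ i + lam) ^ 2 * μ i ^ (-β) :=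
            mul_le_mul_of_nonneg_right h1 (Real.rpow_nonneg hμi.le _)
        _ = lam ^ θ * μ i ^ (-β) * (μ i + lam) ^ 2 := by ring
    calc (lam / (μ i + lam)) ^ 2 * μ i ^ (-γ) * a i ^ 2
        ≤ lam ^ θ * μ i ^ (-β) * a i ^ 2 :=
          mul_le_mul_of_nonneg_right h2 (sq_nonneg _)
      _ = lam ^ θ * (μ i ^ (-β) * a i ^ 2) := by ring
  have hsum2 : Summable (fun i => lam ^ θ * (μ i ^ (-β) * a i ^ 2)) :=
    hsum.mul_left _
  have hnn : ∀ i, 0 ≤ (lam / (μ i + lam)) ^ 2 * μ i ^ (-γ) * a i ^ 2 := by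
    intro i
    have := hμ i
    positivity
  have hL : Summable (fun i => (lam / (μ i + lam)) ^ 2 * μ i ^ (-γ) * a i ^ 2) :=
    Summable.of_nonneg_of_le hnn key hsum2
  calc (∑' i, (lam / (μ i + lam)) ^ 2 * μ i ^ (-γ) * a i ^ 2)
      ≤ ∑' i, lam ^ θ * (μ i ^ (-β) * a i ^ 2) := Summable.tsum_le_tsum key hL hsum2
    _ = lam ^ θ * ∑' i, μ i ^ (-β) * a i ^ 2 := tsum_mul_left
    _ ≤ lam ^ θ * B ^ 2 :=
        mul_le_mul_of_nonneg_left hbound (Real.rpow_nonneg hlam.le θ)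
    _ = B ^ 2 * lam ^ (β - γ) := by rw [mul_comm]
end

section
/- Let H be a separable Hilbert space and X a random variable with values in H on a probability space (Ω, 𝒜, P) such that E‖X‖^m ≤ (1/2)·m!·σ²·L^{m−2} for all integers m ≥ 2. Then the centered variable Y = X − EX satisfies E‖Y‖^m ≤ (1/2)·m!·(4σ²)·(L+σ)^{m−2} for all m ≥ 2. -/
open MeasureTheory Finset

lemma coeff_aux (n i : ℕ) (h : i ≤ n) :
    (n+2).choose (i+2) * Nat.factorial (i+2) ≤ Nat.factorial (n+2) * n.choose i := by
  have hfp : 0 < Nat.factorial (n-i) := Nat.factorial_pos _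
  apply Nat.le_of_mul_le_mul_right _ hfp
  have h1 : (n+2).choose (i+2) * Nat.factorial (i+2) * Nat.factorial (n-i)
      = Nat.factorial (n+2) := by
    have := Nat.choose_mul_factorial_mul_factorial (show i+2 ≤ n+2 by omega)
    simpa [show n+2-(i+2) = n-i by omega] using this
  rw [h1, mul_assoc]
  have h2 : 1 ≤ n.choose i * Nat.factorial (n-i) :=
    Nat.one_le_iff_ne_zero.mpr (Nat.mul_pos (Nat.choose_pos h) hfp).ne'
  calc Nat.factorial (n+2) = Nat.factorial (n+2) * 1 := (mul_one _).symm
    _ ≤ Nat.factorial (n+2) * (n.choose i * Nat.factorial (n-i)) :=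
        Nat.mul_le_mul_left _ h2

lemma sum_bound (σ L : ℝ) (hσ : 0 < σ) (hL : 0 < L) (n : ℕ) (a : ℕ → ℝ)
    (ha0 : a 0 = 1) (ha1 : a 1 ≤ σ)
    (ha : ∀ k : ℕ, a (k+2) ≤ (1/2) * Nat.factorial (k+2) * σ^2 * L^k) :
    ∑ k ∈ Finset.range (n+3), a k * σ^(n+2-k) * ((n+2).choose k : ℝ)
      ≤ 2 * Nat.factorial (n+2) * σ^2 * (L+σ)^n := by
  rw [Finset.sum_range_succ', Finset.sum_range_succ']
  have hmain : ∑ i ∈ Finset.range (n+1),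
      a (i+1+1) * σ^(n+2-(i+1+1)) * ((n+2).choose (i+1+1) : ℝ)
      ≤ (1/2) * Nat.factorial (n+2) * σ^2 * (L+σ)^n := by
    have hbin : (L+σ)^n = ∑ i ∈ Finset.range (n+1), L^i * σ^(n-i) * (n.choose i : ℝ) :=
      add_pow L σ n
    rw [hbin, Finset.mul_sum]
    apply Finset.sum_le_sum
    intro i hi
    have hi' : i ≤ n := by simpa using Nat.lt_succ_iff.mp (Finset.mem_range.mp hi)
    have h1 : a (i+2) ≤ (1/2) * Nat.factorial (i+2) * σ^2 * L^i := ha i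
    have h2 : ((n+2).choose (i+2) : ℝ) * Nat.factorial (i+2)
        ≤ (Nat.factorial (n+2) : ℝ) * n.choose i := by exact_mod_cast coeff_aux n i hi'
    have hpe : σ^(n+2-(i+1+1)) = σ^(n-i) := by congr 1; omega
    have hcn : (0:ℝ) ≤ ((n+2).choose (i+2) : ℝ) := Nat.cast_nonneg _
    have hsn : (0:ℝ) ≤ σ^(n-i) := by positivity
    rw [hpe]
    calc a (i+1+1) * σ^(n-i) * ((n+2).choose (i+1+1) : ℝ)
        ≤ ((1/2) * Nat.factorial (i+2) * σ^2 * L^i) * σ^(n-i) * ((n+2).choose (i+2) : ℝ) := by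
          exact mul_le_mul_of_nonneg_right (mul_le_mul_of_nonneg_right h1 hsn) hcn
      _ = ((1/2) * σ^2 * L^i * σ^(n-i)) * (((n+2).choose (i+2) : ℝ) * Nat.factorial (i+2)) := by
          ring
      _ ≤ ((1/2) * σ^2 * L^i * σ^(n-i)) * ((Nat.factorial (n+2) : ℝ) * n.choose i) := by
          apply mul_le_mul_of_nonneg_left h2; positivity
      _ = (1/2) * Nat.factorial (n+2) * σ^2 * (L^i * σ^(n-i) * (n.choose i : ℝ)) := by ring
  have htail : a (0+1) * σ^(n+2-(0+1)) * ((n+2).choose (0+1) : ℝ)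
      + a 0 * σ^(n+2-0) * ((n+2).choose 0 : ℝ)
      ≤ (3/2) * Nat.factorial (n+2) * σ^2 * (L+σ)^n := by
    simp only [zero_add, Nat.choose_one_right, Nat.choose_zero_right, ha0, Nat.cast_one,
      Nat.cast_add, Nat.cast_ofNat, one_mul, mul_one]
    have e1 : n+2-(0+1) = n+1 := by omega
    have e2 : n+2-0 = n+2 := by omega
    rw [e1, e2]
    have hb1 : a 1 * σ^(n+1) * ((n:ℝ)+2) ≤ σ * σ^(n+1) * ((n:ℝ)+2) := by
      apply mul_le_mul_of_nonneg_right (mul_le_mul_of_nonneg_right ha1 (by positivity))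
      positivity
    have hfact : (2:ℝ) * (n+3) ≤ 3 * Nat.factorial (n+2) := by
      have h := Nat.factorial_pos n
      have : Nat.factorial (n+2) = (n+2) * ((n+1) * Nat.factorial n) := by
        rw [Nat.factorial_succ, Nat.factorial_succ]
      have hge : (n+1)*(n+2) ≤ Nat.factorial (n+2) := by nlinarith
      have hge' : ((n:ℝ)+1)*((n:ℝ)+2) ≤ (Nat.factorial (n+2) : ℝ) := by exact_mod_cast hge
      nlinarith
    have hple : σ^n ≤ (L+σ)^n := pow_le_pow_left₀ hσ.le (by linarith) n
    have key : σ * σ^(n+1) * ((n:ℝ)+2) + σ^(n+2)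
        ≤ (3/2) * Nat.factorial (n+2) * σ^2 * (L+σ)^n := by
      have e3 : σ * σ^(n+1) * ((n:ℝ)+2) + σ^(n+2) = ((n:ℝ)+3) * (σ^2 * σ^n) := by ring
      rw [e3]
      calc ((n:ℝ)+3) * (σ^2 * σ^n) ≤ (3/2) * Nat.factorial (n+2) * (σ^2 * σ^n) := by
            apply mul_le_mul_of_nonneg_right _ (by positivity)
            linarith
        _ ≤ (3/2) * Nat.factorial (n+2) * (σ^2 * (L+σ)^n) := by
            apply mul_le_mul_of_nonneg_left _ (by positivity)
            exact mul_le_mul_of_nonneg_left hple (by positivity)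
        _ = (3/2) * Nat.factorial (n+2) * σ^2 * (L+σ)^n := by ring
    linarith
  linarith

theorem stmt7 {Ω : Type*} [MeasurableSpace Ω] (P : Measure Ω) [IsProbabilityMeasure P]
    {H : Type*} [NormedAddCommGroup H] [InnerProductSpace ℝ H] [CompleteSpace H]
    [SecondCountableTopology H]
    (X : Ω → H) (σ L : ℝ) (hσ : 0 < σ) (hL : 0 < L)
    (hXint : Integrable X P)
    (hmomint : ∀ m : ℕ, 2 ≤ m → Integrable (fun ω => ‖X ω‖ ^ m) P)
    (hmom : ∀ m : ℕ, 2 ≤ m →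
      (∫ ω, ‖X ω‖ ^ m ∂P) ≤ (1 / 2) * (Nat.factorial m) * σ ^ 2 * L ^ (m - 2)) :
    ∀ m : ℕ, 2 ≤ m →
      (∫ ω, ‖X ω - ∫ ω', X ω' ∂P‖ ^ m ∂P)
        ≤ (1 / 2) * (Nat.factorial m) * (4 * σ ^ 2) * (L + σ) ^ (m - 2) := by
  intro m hm
  obtain ⟨n, rfl⟩ : ∃ n, m = n + 2 := ⟨m - 2, by omega⟩
  set μ := ∫ ω', X ω' ∂P with hμdef
  have hmeas : AEStronglyMeasurable X P := hXint.aestronglyMeasurable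
  -- E ‖X‖² ≤ σ²
  have hEX2 : ∫ ω, ‖X ω‖ ^ 2 ∂P ≤ σ ^ 2 := by
    have h := hmom 2 le_rfl
    have he : (1/2 : ℝ) * (Nat.factorial 2) * σ^2 * L^(2-2) = σ^2 := by
      norm_num [Nat.factorial]
    linarith
  -- E ‖X‖ ≤ σ
  have hmem2 : MemLp (fun ω => ‖X ω‖) 2 P := by
    refine (memLp_two_iff_integrable_sq hmeas.norm).2 ?_
    have h := hmomint 2 le_rfl
    exact h
  have hE1 : (∫ ω, ‖X ω‖ ∂P) ≤ σ := by
    have hv := ProbabilityTheory.variance_nonneg (fun ω => ‖X ω‖) P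
    rw [ProbabilityTheory.variance_eq_sub hmem2] at hv
    simp only [Pi.pow_apply] at hv
    have hnn : 0 ≤ ∫ ω, ‖X ω‖ ∂P := integral_nonneg fun ω => norm_nonneg _
    nlinarith
  have hμn : ‖μ‖ ≤ σ := le_trans (norm_integral_le_integral_norm X) hE1
  -- pointwise bound
  have hpt : ∀ ω, ‖X ω - μ‖ ^ (n+2) ≤ (‖X ω‖ + σ) ^ (n+2) := fun ω =>
    pow_le_pow_left₀ (norm_nonneg _)
      (le_trans (norm_sub_le _ _) (by linarith [hμn])) _
  -- integrability of each binomial term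
  have hterm : ∀ k ∈ Finset.range (n+3),
      Integrable (fun ω => ‖X ω‖ ^ k * σ ^ (n+2-k) * ((n+2).choose k : ℝ)) P := by
    intro k _
    rcases k with _ | _ | k
    · simp only [pow_zero, one_mul]
      exact integrable_const _
    · refine (((hXint.norm.mul_const (σ ^ (n+2-1))).mul_const ((n+2).choose 1 : ℝ)).congr ?_)
      filter_upwards with ω
      norm_num
    · exact ((hmomint (k+2) (by omega)).mul_const _).mul_const _
  -- expand (‖X‖+σ)^(n+2)
  have hexp : (fun ω => (‖X ω‖ + σ) ^ (n+2))
      = fun ω => ∑ k ∈ Finset.range (n+3), ‖X ω‖ ^ k * σ ^ (n+2-k) * ((n+2).choose k : ℝ) := by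
    funext ω; exact add_pow _ _ _
  have hgint : Integrable (fun ω => (‖X ω‖ + σ) ^ (n+2)) P := by
    rw [hexp]; exact integrable_finset_sum _ hterm
  have step1 : (∫ ω, ‖X ω - μ‖ ^ (n+2) ∂P) ≤ ∫ ω, (‖X ω‖ + σ) ^ (n+2) ∂P :=
    integral_mono_of_nonneg (Filter.Eventually.of_forall fun ω => by positivity) hgint
      (Filter.Eventually.of_forall hpt)
  have step2 : (∫ ω, (‖X ω‖ + σ) ^ (n+2) ∂P)
      = ∑ k ∈ Finset.range (n+3), (∫ ω, ‖X ω‖ ^ k ∂P) * σ ^ (n+2-k) * ((n+2).choose k : ℝ) := by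
    rw [hexp, integral_finset_sum _ hterm]
    refine Finset.sum_congr rfl fun k _ => ?_
    rw [integral_mul_const, integral_mul_const]
  have step3 : ∑ k ∈ Finset.range (n+3),
      (∫ ω, ‖X ω‖ ^ k ∂P) * σ ^ (n+2-k) * ((n+2).choose k : ℝ)
      ≤ 2 * Nat.factorial (n+2) * σ ^ 2 * (L+σ) ^ n := by
    apply sum_bound σ L hσ hL n _ (by simp) (by simpa using hE1)
    intro k
    have := hmom (k+2) (by omega)
    simpa using this
  calc (∫ ω, ‖X ω - μ‖ ^ (n+2) ∂P) ≤ 2 * Nat.factorial (n+2) * σ ^ 2 * (L+σ) ^ n :=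
        le_trans step1 (step2 ▸ step3)
    _ = (1/2) * Nat.factorial (n+2) * (4 * σ ^ 2) * (L+σ) ^ (n+2-2) := by
        rw [show n+2-2 = n from rfl]; ring
end

section
/- Let P_f and P_g be probability measures on X × ℝ given by P_h(A) = ∫_X ∫_ℝ 1_A(x,y) dN(h(x),σ²)(y) dν(x) for h ∈ L²(ν), where N(m,σ²) is the Gaussian with mean m and variance σ². Then P_f ≪ P_g, P_g ≪ P_f, and the Kullback–Leibler divergence satisfies K(P_f^n, P_g^n) = (n/(2σ²))·‖f − g‖²_{L²(ν)}. -/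
open MeasureTheory ProbabilityTheory
open scoped NNReal

section AuxStmt8

open Real
open scoped ENNReal

/-- Gaussian density change of mean. -/
lemma aux8_gauss_density {v : ℝ≥0} (hv : v ≠ 0) (m₁ m₂ : ℝ) :
    gaussianReal m₁ v = (gaussianReal m₂ v).withDensity
      (fun y => ENNReal.ofReal (Real.exp (((y - m₂)^2 - (y - m₁)^2) / (2*(v:ℝ))))) := by
  have hmeas : Measurable (fun y : ℝ => ENNReal.ofReal
      (Real.exp (((y - m₂)^2 - (y - m₁)^2) / (2*(v:ℝ))))) :=
    (((measurable_id.sub_const m₂).pow_const 2).sub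
      ((measurable_id.sub_const m₁).pow_const 2)).div_const _ |>.exp.ennreal_ofReal
  rw [gaussianReal_of_var_ne_zero _ hv, gaussianReal_of_var_ne_zero _ hv,
    ← withDensity_mul _ (measurable_gaussianPDF _ _) hmeas]
  congr 1
  funext y
  simp only [Pi.mul_apply, gaussianPDF, ← ENNReal.ofReal_mul (gaussianPDFReal_nonneg _ _ _)]
  congr 1
  simp only [gaussianPDFReal, mul_assoc, ← Real.exp_add]
  congr 2
  rw [← add_div]
  congr 1
  ring

/-- compProd with fiberwise densities. -/
lemma aux8_compProd_withDensity {X : Type*} [MeasurableSpace X] (ν : Measure X) [SFinite ν]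
    (κ κ' : Kernel X ℝ) [IsSFiniteKernel κ] [IsSFiniteKernel κ']
    {ρ : X × ℝ → ℝ≥0∞} (hρ : Measurable ρ)
    (hκ : ∀ x, κ x = (κ' x).withDensity (fun y => ρ (x, y))) :
    ν.compProd κ = (ν.compProd κ').withDensity ρ := by
  ext s hs
  rw [Measure.compProd_apply hs, withDensity_apply _ hs,
    ← lintegral_indicator hs, Measure.lintegral_compProd (hρ.indicator hs)]
  refine lintegral_congr fun x => ?_
  have hsec : MeasurableSet (Prod.mk x ⁻¹' s) := measurable_prodMk_left hs
  have : (fun y => s.indicator ρ (x, y))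
      = (Prod.mk x ⁻¹' s).indicator (fun y => ρ (x, y)) := by
    funext y
    by_cases h : (x, y) ∈ s <;> simp [Set.indicator, h]
  rw [this, lintegral_indicator hsec, hκ x, withDensity_apply _ hsec]

/-- map of withDensity under a measurable equiv. -/
lemma aux8_map_withDensity {α β : Type*} [MeasurableSpace α] [MeasurableSpace β]
    (e : α ≃ᵐ β) (μ : Measure α) {h : β → ℝ≥0∞} (hh : Measurable h) :
    Measure.map e (μ.withDensity (h ∘ e)) = (Measure.map e μ).withDensity h := by
  ext s hs
  rw [Measure.map_apply e.measurable hs, withDensity_apply _ hs,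
    withDensity_apply _ (e.measurable hs),
    setLIntegral_map hs hh e.measurable]
  rfl

/-- product of withDensity. -/
lemma aux8_prod_withDensity {α β : Type*} [MeasurableSpace α] [MeasurableSpace β]
    {μ : Measure α} {ν : Measure β} {μ' : Measure α} {ν' : Measure β}
    [IsProbabilityMeasure μ] [IsProbabilityMeasure ν]
    [IsProbabilityMeasure μ'] [IsProbabilityMeasure ν']
    {ρ : α → ℝ≥0∞} {τ : β → ℝ≥0∞} (hρ : Measurable ρ) (hτ : Measurable τ)
    (hμ : μ' = μ.withDensity ρ) (hν : ν' = ν.withDensity τ) :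
    μ'.prod ν' = (μ.prod ν).withDensity (fun p => ρ p.1 * τ p.2) := by
  refine (Measure.prod_eq fun s t hs ht => ?_)
  rw [withDensity_apply _ (hs.prod ht), ← Measure.prod_restrict,
    lintegral_prod_mul hρ.aemeasurable hτ.aemeasurable, hμ, hν,
    withDensity_apply _ hs, withDensity_apply _ ht]

set_option maxHeartbeats 1000000 in
/-- pi of withDensity. -/
lemma aux8_pi_withDensity {Ω : Type*} [MeasurableSpace Ω] (n : ℕ)
    {Q Q' : Measure Ω} [IsProbabilityMeasure Q] [IsProbabilityMeasure Q']
    {ρ : Ω → ℝ≥0∞} (hρ : Measurable ρ) (hQ : Q = Q'.withDensity ρ) :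
    Measure.pi (fun _ : Fin n => Q)
      = (Measure.pi fun _ : Fin n => Q').withDensity (fun ω => ∏ i, ρ (ω i)) := by
  induction n with
  | zero =>
      simp only [Finset.univ_eq_empty, Finset.prod_empty]
      rw [(by rfl : (fun _ : Fin 0 → Ω => (1 : ℝ≥0∞)) = 1), withDensity_one]
      rw [Measure.pi_of_empty, Measure.pi_of_empty]
  | succ n ih =>
      set e := MeasurableEquiv.piFinSuccAbove (fun _ : Fin (n+1) => Ω) 0 with he
      have hmp := measurePreserving_piFinSuccAbove (fun _ : Fin (n+1) => Q) 0
      have hmp' := measurePreserving_piFinSuccAbove (fun _ : Fin (n+1) => Q') 0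
      have hDn : Measurable (fun ω : Fin n → Ω => ∏ i, ρ (ω i)) :=
        Finset.measurable_prod _ fun i _ => hρ.comp (measurable_pi_apply i)
      have h1 : Measure.pi (fun _ : Fin (n+1) => Q)
          = Measure.map e.symm (Q.prod (Measure.pi fun _ : Fin n => Q)) :=
        (hmp.symm e).map_eq.symm
      have h2 : Q.prod (Measure.pi fun _ : Fin n => Q)
          = (Q'.prod (Measure.pi fun _ : Fin n => Q')).withDensity
            (fun p => ρ p.1 * ∏ i, ρ (p.2 i)) :=
        aux8_prod_withDensity (μ := Q') (ν := Measure.pi fun _ : Fin n => Q')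
          (μ' := Q) (ν' := Measure.pi fun _ : Fin n => Q) (ρ := ρ)
          (τ := fun ω => ∏ i, ρ (ω i)) hρ hDn hQ ih
      have h3 : (fun p : Ω × (Fin n → Ω) => ρ p.1 * ∏ i, ρ (p.2 i))
          = (fun ω : Fin (n+1) → Ω => ∏ i, ρ (ω i)) ∘ e.symm := by
        funext p
        simp only [Function.comp_apply, he, MeasurableEquiv.piFinSuccAbove_symm_apply,
          Fin.insertNthEquiv, Equiv.coe_fn_mk, Fin.insertNth_zero, Fin.prod_univ_succ,
          Fin.cons_zero, Fin.cons_succ, Fin.zero_succAbove, cast_eq]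
      have hD : Measurable (fun ω : Fin (n+1) → Ω => ∏ i, ρ (ω i)) :=
        Finset.measurable_prod _ fun i _ => hρ.comp (measurable_pi_apply i)
      rw [h1, h2, h3, aux8_map_withDensity e.symm _ hD, (hmp'.symm e).map_eq]

lemma aux8_map_eval_pi {ι : Type*} [Fintype ι] [DecidableEq ι] {Ω : ι → Type*}
    [∀ i, MeasurableSpace (Ω i)]
    (μ : ∀ i, Measure (Ω i)) [∀ i, IsProbabilityMeasure (μ i)] (i : ι) :
    Measure.map (Function.eval i) (Measure.pi μ) = μ i := by
  ext s hs
  rw [Measure.map_apply (measurable_pi_apply i) hs, Set.eval_preimage, Measure.pi_pi]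
  rw [Finset.prod_eq_single_of_mem i (Finset.mem_univ i)
    (fun j _ hj => by rw [Function.update_of_ne hj]; exact measure_univ)]
  rw [Function.update_self]

lemma aux8_integrable_id_gauss {v : ℝ≥0} (hv : v ≠ 0) :
    Integrable (fun z : ℝ => z) (gaussianReal 0 v) := by
  rw [gaussianReal_of_var_ne_zero _ hv,
    integrable_withDensity_iff (measurable_gaussianPDF _ _)
      (ae_of_all _ fun x => ENNReal.ofReal_lt_top)]
  have h2v : 0 < (2 * (v:ℝ))⁻¹ := by
    have : (0:ℝ) < v := by exact_mod_cast pos_iff_ne_zero.mpr hv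
    positivity
  have h := (integrable_mul_exp_neg_mul_sq h2v).const_mul ((Real.sqrt (2 * π * v))⁻¹)
  refine h.congr (ae_of_all _ fun z => ?_)
  have hpdf : (gaussianPDF 0 v z).toReal = gaussianPDFReal 0 v z := by
    rw [gaussianPDF_def]; exact ENNReal.toReal_ofReal (gaussianPDFReal_nonneg _ _ _)
  simp only []
  rw [hpdf, gaussianPDFReal_def]
  ring_nf

lemma aux8_integral_id_gauss {v : ℝ≥0} (hv : v ≠ 0) :
    ∫ z, z ∂(gaussianReal 0 v) = 0 := by
  have hmap : Measure.map (fun z : ℝ => (-1 : ℝ) * z) (gaussianReal 0 v) = gaussianReal 0 v := by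
    have h1 : ((⟨(-1:ℝ)^2, sq_nonneg _⟩ : ℝ≥0)) = 1 := by ext; norm_num
    calc Measure.map (fun z : ℝ => (-1 : ℝ) * z) (gaussianReal 0 v)
        = Measure.map ((-1 : ℝ) * ·) (gaussianReal 0 v) := rfl
      _ = gaussianReal ((-1) * 0) (⟨(-1:ℝ)^2, sq_nonneg _⟩ * v) := gaussianReal_map_const_mul _
      _ = gaussianReal 0 v := by
          rw [show ((-1:ℝ) * 0) = 0 by norm_num]; congr 1; exact (congrArg (fun x : ℝ≥0 => x * v) h1).trans (one_mul v)
  have h : ∫ z, z ∂(gaussianReal 0 v) = ∫ z, (-1 : ℝ) * z ∂(gaussianReal 0 v) := by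
    conv_lhs => rw [← hmap]
    exact integral_map (φ := fun z : ℝ => (-1:ℝ) * z) (f := fun z : ℝ => z)
      (by exact (measurable_id.const_mul (-1)).aemeasurable)
      (by exact measurable_id.aestronglyMeasurable)
  simp only [neg_one_mul] at h
  rw [integral_neg] at h
  linarith

lemma aux8_compProd_eq_map {X : Type*} [MeasurableSpace X] (ν : Measure X) [SFinite ν] {v : ℝ≥0}
    {f : X → ℝ} (hf : Measurable f) (κ : Kernel X ℝ) [IsSFiniteKernel κ]
    (hκ : ∀ x, κ x = gaussianReal (f x) v) :
    ν.compProd κ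
      = Measure.map (fun p : X × ℝ => (p.1, f p.1 + p.2)) (ν.prod (gaussianReal 0 v)) := by
  have hT : Measurable (fun p : X × ℝ => (p.1, f p.1 + p.2)) :=
    measurable_fst.prodMk ((hf.comp measurable_fst).add measurable_snd)
  ext s hs
  rw [Measure.compProd_apply hs, Measure.map_apply hT hs, Measure.prod_apply (hT hs)]
  refine lintegral_congr fun x => ?_
  have hsec : MeasurableSet (Prod.mk x ⁻¹' s) := measurable_prodMk_left hs
  have hset : Prod.mk x ⁻¹' ((fun p : X × ℝ => (p.1, f p.1 + p.2)) ⁻¹' s)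
      = (f x + ·) ⁻¹' (Prod.mk x ⁻¹' s) := rfl
  rw [hκ x, hset, ← Measure.map_apply (measurable_const_add (f x)) hsec,
    gaussianReal_map_const_add, zero_add]

lemma aux8_integral_phi {X : Type*} [MeasurableSpace X] (ν : Measure X) [IsProbabilityMeasure ν]
    {v : ℝ≥0} (hv : v ≠ 0) {f g : X → ℝ} (hf : Measurable f) (hg : Measurable g)
    (hf2 : Integrable (fun x => f x ^ 2) ν) (hg2 : Integrable (fun x => g x ^ 2) ν) :
    Integrable (fun p : X × ℝ => ((p.2 - g p.1)^2 - (p.2 - f p.1)^2) / (2*(v:ℝ)))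
      (Measure.map (fun p : X × ℝ => (p.1, f p.1 + p.2)) (ν.prod (gaussianReal 0 v)))
    ∧ ∫ p, ((p.2 - g p.1)^2 - (p.2 - f p.1)^2) / (2*(v:ℝ))
        ∂(Measure.map (fun p : X × ℝ => (p.1, f p.1 + p.2)) (ν.prod (gaussianReal 0 v)))
      = (∫ x, (f x - g x)^2 ∂ν) / (2*(v:ℝ)) := by
  have hvR : (0:ℝ) < v := by exact_mod_cast pos_iff_ne_zero.mpr hv
  set φ : X × ℝ → ℝ := fun p => ((p.2 - g p.1)^2 - (p.2 - f p.1)^2) / (2*(v:ℝ)) with hφ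
  set T : X × ℝ → X × ℝ := fun p => (p.1, f p.1 + p.2) with hTdef
  set a : X → ℝ := fun x => (f x - g x)^2 / (2*(v:ℝ)) with ha
  set b : X → ℝ := fun x => (f x - g x) / (v:ℝ) with hb
  have hT : Measurable T :=
    measurable_fst.prodMk ((hf.comp measurable_fst).add measurable_snd)
  have hφm : Measurable φ := by
    apply Measurable.div_const
    exact ((measurable_snd.sub (hg.comp measurable_fst)).pow_const 2).sub
      ((measurable_snd.sub (hf.comp measurable_fst)).pow_const 2)
  have hcomp : ∀ p : X × ℝ, φ (T p) = a p.1 * 1 + b p.1 * p.2 := by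
    intro p
    simp only [hφ, hTdef, ha, hb]
    field_simp
    ring
  have hfL2 : MemLp f 2 ν := (memLp_two_iff_integrable_sq hf.aestronglyMeasurable).mpr hf2
  have hgL2 : MemLp g 2 ν := (memLp_two_iff_integrable_sq hg.aestronglyMeasurable).mpr hg2
  have hfgL2 : MemLp (f - g) 2 ν := hfL2.sub hgL2
  have hfgInt : Integrable (fun x => f x - g x) ν := hfgL2.integrable one_le_two
  have hfg2 : Integrable (fun x => (f x - g x)^2) ν :=
    (memLp_two_iff_integrable_sq (hf.sub hg).aestronglyMeasurable).mp hfgL2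
  have haInt : Integrable a ν := hfg2.div_const _
  have hbInt : Integrable b ν := hfgInt.div_const _
  have term1 : Integrable (fun p : X × ℝ => a p.1 * 1) (ν.prod (gaussianReal 0 v)) :=
    haInt.mul_prod (integrable_const 1)
  have term2 : Integrable (fun p : X × ℝ => b p.1 * p.2) (ν.prod (gaussianReal 0 v)) :=
    hbInt.mul_prod (aux8_integrable_id_gauss hv)
  have hint' : Integrable (φ ∘ T) (ν.prod (gaussianReal 0 v)) := by
    have : (φ ∘ T) = fun p : X × ℝ => a p.1 * 1 + b p.1 * p.2 := funext hcomp
    rw [this]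
    exact term1.add term2
  have hint : Integrable φ (Measure.map T (ν.prod (gaussianReal 0 v))) :=
    (integrable_map_measure hφm.aestronglyMeasurable hT.aemeasurable).mpr hint'
  refine ⟨hint, ?_⟩
  rw [integral_map hT.aemeasurable hφm.aestronglyMeasurable]
  calc ∫ p, φ (T p) ∂(ν.prod (gaussianReal 0 v))
      = ∫ p : X × ℝ, (a p.1 * 1 + b p.1 * p.2) ∂(ν.prod (gaussianReal 0 v)) :=
        integral_congr_ae (ae_of_all _ hcomp)
    _ = (∫ p : X × ℝ, a p.1 * 1 ∂(ν.prod (gaussianReal 0 v)))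
        + ∫ p : X × ℝ, b p.1 * p.2 ∂(ν.prod (gaussianReal 0 v)) := integral_add term1 term2
    _ = (∫ x, a x ∂ν) * (∫ z, (1:ℝ) ∂(gaussianReal 0 v))
        + (∫ x, b x ∂ν) * ∫ z, z ∂(gaussianReal 0 v) := by
        rw [integral_prod_mul a (fun _ => (1:ℝ)), integral_prod_mul b (fun z => z)]
    _ = (∫ x, (f x - g x)^2 ∂ν) / (2*(v:ℝ)) := by
        rw [aux8_integral_id_gauss hv]
        simp [ha, integral_div]

end AuxStmt8

/-- Kullback–Leibler divergence `K(Q, Q') = ∫ log (dQ/dQ') dQ` as a real number. -/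
noncomputable def klReal {Ω : Type*} [MeasurableSpace Ω] (Q Q' : Measure Ω) : ℝ :=
  ∫ ω, Real.log ((Q.rnDeriv Q' ω).toReal) ∂Q

theorem stmt8 {X : Type*} [MeasurableSpace X] (ν : Measure X) [IsProbabilityMeasure ν]
    (v : ℝ≥0) (hv : 0 < v) (f g : X → ℝ)
    (hf : Measurable f) (hg : Measurable g)
    (hf2 : Integrable (fun x => f x ^ 2) ν) (hg2 : Integrable (fun x => g x ^ 2) ν)
    (κf κg : ProbabilityTheory.Kernel X ℝ)
    (hκf : ∀ x, κf x = gaussianReal (f x) v)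
    (hκg : ∀ x, κg x = gaussianReal (g x) v)
    (Pf Pg : Measure (X × ℝ))
    (hPf : Pf = ν.compProd κf) (hPg : Pg = ν.compProd κg) :
    Pf ≪ Pg ∧ Pg ≪ Pf ∧
      ∀ n : ℕ, klReal (Measure.pi (fun _ : Fin n => Pf)) (Measure.pi (fun _ : Fin n => Pg))
        = (n : ℝ) / (2 * (v : ℝ)) * ∫ x, (f x - g x) ^ 2 ∂ν := by
  have hvne : v ≠ 0 := hv.ne'
  haveI : IsMarkovKernel κf := ⟨fun x => by rw [hκf x]; infer_instance⟩
  haveI : IsMarkovKernel κg := ⟨fun x => by rw [hκg x]; infer_instance⟩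
  haveI hPfP : IsProbabilityMeasure Pf := by rw [hPf]; infer_instance
  haveI hPgP : IsProbabilityMeasure Pg := by rw [hPg]; infer_instance
  set ρfg : X × ℝ → ENNReal := fun p =>
    ENNReal.ofReal (Real.exp (((p.2 - g p.1)^2 - (p.2 - f p.1)^2) / (2*(v:ℝ)))) with hρfgdef
  set ρgf : X × ℝ → ENNReal := fun p =>
    ENNReal.ofReal (Real.exp (((p.2 - f p.1)^2 - (p.2 - g p.1)^2) / (2*(v:ℝ)))) with hρgfdef
  have hρfg : Measurable ρfg :=
    ((((measurable_snd.sub (hg.comp measurable_fst)).pow_const 2).sub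
      ((measurable_snd.sub (hf.comp measurable_fst)).pow_const 2)).div_const
      _).exp.ennreal_ofReal
  have hρgf : Measurable ρgf :=
    ((((measurable_snd.sub (hf.comp measurable_fst)).pow_const 2).sub
      ((measurable_snd.sub (hg.comp measurable_fst)).pow_const 2)).div_const
      _).exp.ennreal_ofReal
  have hPfwd : Pf = Pg.withDensity ρfg := by
    rw [hPf, hPg]
    exact aux8_compProd_withDensity ν κf κg hρfg
      (fun x => by rw [hκf x, hκg x]; exact aux8_gauss_density hvne (f x) (g x))
  have hPgwd : Pg = Pf.withDensity ρgf := by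
    rw [hPf, hPg]
    exact aux8_compProd_withDensity ν κg κf hρgf
      (fun x => by rw [hκf x, hκg x]; exact aux8_gauss_density hvne (g x) (f x))
  refine ⟨hPfwd ▸ withDensity_absolutelyContinuous _ _,
    hPgwd ▸ withDensity_absolutelyContinuous _ _, fun n => ?_⟩
  -- setup for fixed n
  set φ : X × ℝ → ℝ := fun p => ((p.2 - g p.1)^2 - (p.2 - f p.1)^2) / (2*(v:ℝ)) with hφdef
  have hφm : Measurable φ :=
    (((measurable_snd.sub (hg.comp measurable_fst)).pow_const 2).sub
      ((measurable_snd.sub (hf.comp measurable_fst)).pow_const 2)).div_const _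
  have hmapPf : Pf
      = Measure.map (fun p : X × ℝ => (p.1, f p.1 + p.2)) (ν.prod (gaussianReal 0 v)) := by
    rw [hPf]; exact aux8_compProd_eq_map ν hf κf hκf
  obtain ⟨hφint', hφval'⟩ := aux8_integral_phi ν hvne hf hg hf2 hg2
  have hφint : Integrable φ Pf := by rw [hmapPf]; exact hφint'
  have hφval : ∫ p, φ p ∂Pf = (∫ x, (f x - g x)^2 ∂ν) / (2*(v:ℝ)) := by
    rw [hmapPf]; exact hφval'
  set D : (Fin n → X × ℝ) → ENNReal := fun ω => ∏ i, ρfg (ω i) with hDdef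
  have hD : Measurable D :=
    Finset.measurable_prod _ fun i _ => hρfg.comp (measurable_pi_apply i)
  have h1 : Measure.pi (fun _ : Fin n => Pf)
      = (Measure.pi fun _ : Fin n => Pg).withDensity D :=
    aux8_pi_withDensity n hρfg hPfwd
  have hACpi : Measure.pi (fun _ : Fin n => Pf) ≪ Measure.pi (fun _ : Fin n => Pg) :=
    h1 ▸ withDensity_absolutelyContinuous _ _
  have hrn : (Measure.pi (fun _ : Fin n => Pf)).rnDeriv (Measure.pi fun _ : Fin n => Pg)
      =ᵐ[Measure.pi fun _ : Fin n => Pg] D := by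
    rw [h1]; exact Measure.rnDeriv_withDensity _ hD
  have hrn' : (Measure.pi (fun _ : Fin n => Pf)).rnDeriv (Measure.pi fun _ : Fin n => Pg)
      =ᵐ[Measure.pi fun _ : Fin n => Pf] D := hACpi.ae_eq hrn
  have hlogD : ∀ ω : Fin n → X × ℝ, Real.log ((D ω).toReal) = ∑ i, φ (ω i) := by
    intro ω
    have h1 : (D ω).toReal = ∏ i, Real.exp (φ (ω i)) := by
      rw [hDdef]
      simp only []
      rw [ENNReal.toReal_prod]
      exact Finset.prod_congr rfl fun i _ => ENNReal.toReal_ofReal (Real.exp_nonneg _)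
    rw [h1, Real.log_prod (fun i _ => (Real.exp_pos _).ne')]
    simp [Real.log_exp]
  have heval : ∀ i : Fin n, Measure.map (Function.eval i)
      (Measure.pi fun _ : Fin n => Pf) = Pf := fun i => aux8_map_eval_pi _ i
  have hφi : ∀ i : Fin n, Integrable (fun ω : Fin n → X × ℝ => φ (ω i))
      (Measure.pi fun _ : Fin n => Pf) := by
    intro i
    have h := hφint
    rw [← heval i] at h
    exact (integrable_map_measure hφm.aestronglyMeasurable
      (measurable_pi_apply i).aemeasurable).mp h
  have hφieq : ∀ i : Fin n, ∫ ω, φ (ω i) ∂(Measure.pi fun _ : Fin n => Pf)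
      = ∫ p, φ p ∂Pf := by
    intro i
    conv_rhs => rw [← heval i]
    rw [integral_map (measurable_pi_apply i).aemeasurable hφm.aestronglyMeasurable]
  calc klReal (Measure.pi (fun _ : Fin n => Pf)) (Measure.pi (fun _ : Fin n => Pg))
      = ∫ ω, Real.log ((D ω).toReal) ∂(Measure.pi fun _ : Fin n => Pf) := by
        refine integral_congr_ae ?_
        filter_upwards [hrn'] with ω hω
        rw [hω]
    _ = ∫ ω, ∑ i, φ (ω i) ∂(Measure.pi fun _ : Fin n => Pf) := by
        refine integral_congr_ae (ae_of_all _ fun ω => ?_)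
        exact hlogD ω
    _ = ∑ i : Fin n, ∫ ω, φ (ω i) ∂(Measure.pi fun _ : Fin n => Pf) :=
        integral_finset_sum _ fun i _ => hφi i
    _ = ∑ _i : Fin n, ∫ p, φ p ∂Pf := Finset.sum_congr rfl fun i _ => hφieq i
    _ = (n : ℝ) * ((∫ x, (f x - g x)^2 ∂ν) / (2*(v:ℝ))) := by
        rw [Finset.sum_const, Finset.card_univ, Fintype.card_fin, nsmul_eq_mul, hφval]
    _ = (n : ℝ) / (2 * (v : ℝ)) * ∫ x, (f x - g x) ^ 2 ∂ν := by ring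
end
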